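/- arXiv:1707.00899 — 3 statements merged into one kernel-verified Lean document; each statement's English description precedes it below -/
import Mathlib

section
/- The Legendre–Fenchel transform I_3(x) = sup_{θ∈ℝ} {θx − log(1+3e^{2θ})} equals (x/2)·log(x/(6−3x)) − log(6/(6−3x)) for all x in the open interval (0,2). -/
/-!
Substituting `s = 2θ` and `p = x / 2` turns the supremum into the Legendre transform of
`s ↦ log (1 + c eˢ)` at `p ∈ (0, 1)`, with `c = 3`. Concavity of `log`, applied to
`1 + c eˢ = (1 - p) · 1 / (1 - p) + p · c eˢ / p`, bounds `p s - log (1 + c eˢ)` above, and the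
bound is attained where the two averaged points agree, i.e. where `c eˢ = p / (1 - p)`.
-/

open Real

section LegendreTransform

variable {c p : ℝ}

theorem mul_sub_log_one_add_mul_exp_le (hc : 0 < c) (hp₀ : 0 < p) (hp₁ : p < 1) (s : ℝ) :
    p * s - log (1 + c * exp s) ≤ p * log (p / (c * (1 - p))) - log (1 / (1 - p)) := by
  have hq : 0 < 1 - p := by linarith
  have hb : 0 < c * exp s / p := by positivity
  have hconc := strictConcaveOn_log_Ioi.concaveOn.2 (Set.mem_Ioi.2 (one_div_pos.2 hq))
    (Set.mem_Ioi.2 hb) hq.le hp₀.le (by ring)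
  have hsum : (1 - p) * (1 / (1 - p)) + p * (c * exp s / p) = 1 + c * exp s := by field_simp
  simp only [smul_eq_mul, hsum] at hconc
  rw [log_div (by positivity) hp₀.ne', log_mul hc.ne' (exp_pos s).ne', log_exp] at hconc
  rw [log_div hp₀.ne' (by positivity), log_mul hc.ne' hq.ne']
  rw [one_div, log_inv] at hconc ⊢
  linarith

theorem iSup_mul_sub_log_one_add_mul_exp (hc : 0 < c) (hp₀ : 0 < p) (hp₁ : p < 1) :
    ⨆ s, p * s - log (1 + c * exp s) = p * log (p / (c * (1 - p))) - log (1 / (1 - p)) := by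
  have hq : 0 < 1 - p := by linarith
  have hle := mul_sub_log_one_add_mul_exp_le hc hp₀ hp₁
  have hattained : p * log (p / (c * (1 - p))) - log (1 + c * exp (log (p / (c * (1 - p))))) =
      p * log (p / (c * (1 - p))) - log (1 / (1 - p)) := by
    rw [exp_log (by positivity)]
    congr 2
    field_simp
    ring
  exact le_antisymm (ciSup_le hle)
    (le_ciSup_of_le ⟨_, Set.forall_mem_range.2 hle⟩ _ hattained.ge)

end LegendreTransform

theorem stmt2 (x : ℝ) (hx : x ∈ Set.Ioo (0:ℝ) 2) :
    (⨆ θ : ℝ, (θ * x - Real.log (1 + 3 * Real.exp (2 * θ)))) =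
      x / 2 * Real.log (x / (6 - 3 * x)) - Real.log (6 / (6 - 3 * x)) := by
  obtain ⟨hx₀, hx₂⟩ := hx
  have h6 : 6 - 3 * x ≠ 0 := by linarith
  calc ⨆ θ : ℝ, θ * x - log (1 + 3 * exp (2 * θ))
      = ⨆ s, x / 2 * s - log (1 + 3 * exp s) := by
        refine .trans ?_
          ((mul_left_surjective₀ two_ne_zero).iSup_comp fun s => x / 2 * s - log (1 + 3 * exp s))
        exact iSup_congr fun θ => by ring
    _ = x / 2 * log (x / 2 / (3 * (1 - x / 2))) - log (1 / (1 - x / 2)) :=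
        iSup_mul_sub_log_one_add_mul_exp three_pos (by linarith) (by linarith)
    _ = x / 2 * log (x / (6 - 3 * x)) - log (6 / (6 - 3 * x)) := by
        rw [div_div, show 2 * (3 * (1 - x / 2)) = 6 - 3 * x by ring,
          show 1 / (1 - x / 2) = 6 / (6 - 3 * x) by rw [eq_div_iff h6]; field_simp; ring]
end

section
/- Let a, b > 0 and let ξ ∈ (0, π/2) satisfy 2ξ² = a b² cos²ξ. Then the function g(x) = (1/b)·log(cos²ξ / cos²(ξ(x−1))) on [0,1] satisfies the Euler–Lagrange equation g''(x) = a·b·e^{b·g(x)} with boundary conditions g(0) = 0 and g'(1) = 0. -/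
/-!
With `u = ξ (x - 1)`, `g = (1/b) log (cos² ξ / cos² u)` has `g' = (2ξ/b) tan u`, which vanishes at
`x = 1`, and `g'' = (2ξ²/b) / cos² u`, while `e^{b g} = cos² ξ / cos² u`. The relation
`2ξ² = a b² cos² ξ` is exactly what makes the two constants agree. On `[0, 1]` we have
`|u| ≤ ξ < π/2`, so `cos u ≠ 0` on a neighbourhood of every such `x`.
-/

open Real Filter Topology Set

theorem Real.hasDerivAt_log_div_cos_sq {C u : ℝ} (hC : C ≠ 0) (hu : cos u ≠ 0) :
    HasDerivAt (fun u => log (C / cos u ^ 2)) (2 * tan u) u := by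
  have h := (hasDerivAt_const u C).fun_div ((hasDerivAt_cos u).fun_pow 2) (pow_ne_zero 2 hu)
  refine (h.log (div_ne_zero hC (pow_ne_zero 2 hu))).congr_deriv ?_
  rw [tan_eq_sin_div_cos]
  field_simp
  norm_num
  ring

noncomputable def liouvilleProfile (b ξ C x : ℝ) : ℝ :=
  1 / b * log (C / cos (ξ * (x - 1)) ^ 2)

section LiouvilleProfile

variable {a b ξ C x : ℝ}

theorem hasDerivAt_liouvilleProfile (hC : C ≠ 0) (hx : cos (ξ * (x - 1)) ≠ 0) :
    HasDerivAt (liouvilleProfile b ξ C) (2 * ξ / b * tan (ξ * (x - 1))) x := by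
  have hlin : HasDerivAt (fun x => ξ * (x - 1)) ξ x := by
    simpa using ((hasDerivAt_id x).sub_const 1).const_mul ξ
  exact (((hasDerivAt_log_div_cos_sq hC hx).comp x hlin).const_mul (1 / b)).congr_deriv
    (by ring)

theorem deriv_deriv_liouvilleProfile (hC : C ≠ 0) (hx : cos (ξ * (x - 1)) ≠ 0) :
    deriv (deriv (liouvilleProfile b ξ C)) x = 2 * ξ ^ 2 / b / cos (ξ * (x - 1)) ^ 2 := by
  have hopen : IsOpen {y : ℝ | cos (ξ * (y - 1)) ≠ 0} :=
    isOpen_ne_fun (by fun_prop) continuous_const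
  have hderiv : deriv (liouvilleProfile b ξ C) =ᶠ[𝓝 x] fun y => 2 * ξ / b * tan (ξ * (y - 1)) :=
    eventually_of_mem (hopen.mem_nhds hx) fun y hy => (hasDerivAt_liouvilleProfile hC hy).deriv
  have hlin : HasDerivAt (fun x => ξ * (x - 1)) ξ x := by
    simpa using ((hasDerivAt_id x).sub_const 1).const_mul ξ
  have htan : HasDerivAt (fun y => 2 * ξ / b * tan (ξ * (y - 1)))
      (2 * ξ / b * (1 / cos (ξ * (x - 1)) ^ 2 * ξ)) x :=
    ((hasDerivAt_tan hx).comp x hlin).const_mul _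
  rw [hderiv.deriv_eq, htan.deriv]
  ring

theorem exp_mul_liouvilleProfile (hb : b ≠ 0) (hC : 0 < C) (hx : cos (ξ * (x - 1)) ≠ 0) :
    exp (b * liouvilleProfile b ξ C x) = C / cos (ξ * (x - 1)) ^ 2 := by
  rw [liouvilleProfile, ← mul_assoc, mul_one_div_cancel hb, one_mul, exp_log (by positivity)]

theorem liouvilleProfile_liouville_eq (hb : b ≠ 0) (hC : 0 < C) (h : 2 * ξ ^ 2 = a * b ^ 2 * C)
    (hx : cos (ξ * (x - 1)) ≠ 0) :
    deriv (deriv (liouvilleProfile b ξ C)) x = a * b * exp (b * liouvilleProfile b ξ C x) := by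
  rw [deriv_deriv_liouvilleProfile hC.ne' hx, exp_mul_liouvilleProfile hb hC hx, h]
  field_simp

end LiouvilleProfile

theorem stmt6_general (a b ξ : ℝ) (hb : 0 < b)
    (hξ : ξ ∈ Set.Ioo 0 (Real.pi / 2)) (heq : 2 * ξ^2 = a * b^2 * (Real.cos ξ)^2)
    (g : ℝ → ℝ)
    (hg : ∀ x, g x = (1/b) * Real.log ((Real.cos ξ)^2 / (Real.cos (ξ * (x - 1)))^2)) :
    g 0 = 0 ∧ deriv g 1 = 0 ∧
    ∀ x ∈ Set.Icc (0:ℝ) 1, deriv (deriv g) x = a * b * Real.exp (b * g x) := by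
  obtain ⟨hξ0, hξπ⟩ := hξ
  have hcos : ∀ x ∈ Icc (0 : ℝ) 1, cos (ξ * (x - 1)) ≠ 0 := fun x ⟨hx0, hx1⟩ =>
    (cos_pos_of_mem_Ioo ⟨by nlinarith, by nlinarith [pi_pos]⟩).ne'
  have hC : 0 < cos ξ ^ 2 := pow_pos (cos_pos_of_mem_Ioo ⟨by linarith [pi_pos], hξπ⟩) 2
  obtain rfl : g = liouvilleProfile b ξ (cos ξ ^ 2) := funext hg
  refine ⟨?_, ?_, fun x hx => liouvilleProfile_liouville_eq hb.ne' hC heq (hcos x hx)⟩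
  · simp [liouvilleProfile, hC.ne']
  · rw [(hasDerivAt_liouvilleProfile hC.ne' (hcos 1 ⟨zero_le_one, le_rfl⟩)).deriv]
    simp

theorem stmt6 (a b ξ : ℝ) (ha : 0 < a) (hb : 0 < b)
    (hξ : ξ ∈ Set.Ioo 0 (Real.pi / 2)) (heq : 2 * ξ^2 = a * b^2 * (Real.cos ξ)^2)
    (g : ℝ → ℝ)
    (hg : ∀ x, g x = (1/b) * Real.log ((Real.cos ξ)^2 / (Real.cos (ξ * (x - 1)))^2)) :
    g 0 = 0 ∧ deriv g 1 = 0 ∧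
    ∀ x ∈ Set.Icc (0:ℝ) 1, deriv (deriv g) x = a * b * Real.exp (b * g x) :=
  stmt6_general a b ξ hb hξ heq g hg
end

section
/- Let (V_j)_{j≥1} be i.i.d. standard normal random variables and β, ε > 0. Define V_j^{(n)} = (n/√(2β))·log|1 + (√(2β)/n)V_j|. Then limsup_{n→∞} (1/n)·log P( Σ_{j=1}^n |V_j^{(n)} − V_j| ≥ nε ) = −∞. -/
/-!
Taylor's bound `|log (1 + x) - x| ≤ 2x²` for `|x| < 1/2` shows that on the event, either some
`|V_j| ≥ n / (2√(2β))`, or the discrepancy is at most `(2√(2β)/n) ∑ V_j²`; in both cases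
`∑_{j<n} V_j² ≥ K n²` for a constant `K > 0`. By Fernique's theorem `exp (t V²)` is integrable
for some `t > 0`, so the Chernoff bound gives probability at most `exp (-t K n²) · C^n`, which is
eventually below `exp (-M n)` because the quadratic exponent wins.
-/

open MeasureTheory ProbabilityTheory Real Finset

lemma abs_log_one_add_sub_self_le {x : ℝ} (hx : |x| < 1 / 2) : |log (1 + x) - x| ≤ 2 * x ^ 2 := by
  have h := abs_log_sub_add_sum_range_le (x := -x) (by rw [abs_neg]; linarith) 1
  simp only [sum_range_one, Nat.cast_zero, zero_add, pow_one, div_one, abs_neg, sub_neg_eq_add,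
    one_add_one_eq_two, sq_abs] at h
  calc |log (1 + x) - x| = |-x + log (1 + x)| := by ring_nf
    _ ≤ x ^ 2 / (1 - |x|) := h
    _ ≤ 2 * x ^ 2 := by
      rw [div_le_iff₀ (by linarith)]
      nlinarith [sq_nonneg x, abs_nonneg x]

/-- `V_j^{(n)} = logPerturbation n √(2β) V_j`. -/
noncomputable def logPerturbation (a c v : ℝ) : ℝ := a / c * log |1 + c / a * v|

lemma abs_logPerturbation_sub_le {a c v : ℝ} (ha : 0 < a) (hc : 0 < c) (hv : |v| < a / (2 * c)) :
    |logPerturbation a c v - v| ≤ 2 * c / a * v ^ 2 := by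
  have hx : |c / a * v| < 1 / 2 := by
    rw [abs_mul, abs_of_pos (div_pos hc ha)]
    calc c / a * |v| < c / a * (a / (2 * c)) := by gcongr
      _ = 1 / 2 := by field_simp
  have hsplit : logPerturbation a c v - v = a / c * (log (1 + c / a * v) - c / a * v) := by
    rw [logPerturbation, log_abs]
    field_simp
  rw [hsplit, abs_mul, abs_of_pos (div_pos ha hc)]
  calc a / c * |log (1 + c / a * v) - c / a * v| ≤ a / c * (2 * (c / a * v) ^ 2) := by
        gcongr
        exact abs_log_one_add_sub_self_le hx
    _ = 2 * c / a * v ^ 2 := by field_simp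

lemma min_mul_sq_le_sum_sq_of_le_sum_abs_logPerturbation_sub {ι : Type*} (s : Finset ι)
    (v : ι → ℝ) {a c ε : ℝ} (ha : 0 < a) (hc : 0 < c)
    (h : a * ε ≤ ∑ j ∈ s, |logPerturbation a c (v j) - v j|) :
    min (ε / (2 * c)) (1 / (4 * c ^ 2)) * a ^ 2 ≤ ∑ j ∈ s, v j ^ 2 := by
  by_cases hlarge : ∃ j ∈ s, a / (2 * c) ≤ |v j|
  · obtain ⟨j, hj, hvj⟩ := hlarge
    calc min (ε / (2 * c)) (1 / (4 * c ^ 2)) * a ^ 2 ≤ 1 / (4 * c ^ 2) * a ^ 2 :=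
          mul_le_mul_of_nonneg_right (min_le_right _ _) (sq_nonneg a)
      _ = (a / (2 * c)) ^ 2 := by field_simp; ring
      _ ≤ v j ^ 2 := by rw [← sq_abs (v j)]; gcongr
      _ ≤ ∑ j ∈ s, v j ^ 2 := single_le_sum (fun i _ => sq_nonneg (v i)) hj
  · push Not at hlarge
    have hsum : a * ε ≤ 2 * c / a * ∑ j ∈ s, v j ^ 2 := by
      calc a * ε ≤ ∑ j ∈ s, |logPerturbation a c (v j) - v j| := h
        _ ≤ ∑ j ∈ s, 2 * c / a * v j ^ 2 :=
          sum_le_sum fun j hj => abs_logPerturbation_sub_le ha hc (hlarge j hj)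
        _ = 2 * c / a * ∑ j ∈ s, v j ^ 2 := (mul_sum _ _ _).symm
    calc min (ε / (2 * c)) (1 / (4 * c ^ 2)) * a ^ 2 ≤ ε / (2 * c) * a ^ 2 :=
          mul_le_mul_of_nonneg_right (min_le_left _ _) (sq_nonneg a)
      _ ≤ ∑ j ∈ s, v j ^ 2 := by
        have hsq : a * (a * ε) ≤ 2 * c * ∑ j ∈ s, v j ^ 2 := by
          calc a * (a * ε) ≤ a * (2 * c / a * ∑ j ∈ s, v j ^ 2) := by gcongr
            _ = 2 * c * ∑ j ∈ s, v j ^ 2 := by field_simp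
        rw [div_mul_eq_mul_div, div_le_iff₀ (by positivity)]
        linarith

lemma exists_exp_neg_mul_sq_mul_pow_le {a : ℝ} (ha : 0 < a) (M : ℝ) {C : ℝ} (hC : 0 < C) :
    ∃ N : ℕ, ∀ n ≥ N, exp (-a * n ^ 2) * C ^ n ≤ exp (-M * n) := by
  obtain ⟨N, hN⟩ := exists_nat_ge ((M + log C) / a)
  refine ⟨N, fun n hn => ?_⟩
  have hn' : M + log C ≤ a * n := (div_le_iff₀' ha).1 (hN.trans (by exact_mod_cast hn))
  rw [← exp_log hC, ← exp_nat_mul, ← exp_add, exp_le_exp]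
  nlinarith [(Nat.cast_nonneg n : (0 : ℝ) ≤ n)]

namespace ProbabilityTheory

variable {Ω ι : Type*} [MeasurableSpace Ω] {P : Measure Ω}

theorem iIndepFun.measureReal_sum_comp_ge_le {V : ι → Ω → ℝ} (hindep : iIndepFun V P)
    (hmeas : ∀ j, Measurable (V j)) {μ : Measure ℝ} (hdist : ∀ j, P.map (V j) = μ)
    {f : ℝ → ℝ} (hf : Measurable f) {t : ℝ} (ht : 0 ≤ t)
    (hint : Integrable (fun x => exp (t * f x)) μ) (s : Finset ι) (a : ℝ) :
    P.real {ω | a ≤ ∑ j ∈ s, f (V j ω)} ≤ exp (-t * a) * mgf f μ t ^ #s := by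
  have : IsProbabilityMeasure P := hindep.isProbabilityMeasure
  set W : ι → Ω → ℝ := fun j => f ∘ V j
  have hWmeas : ∀ j, Measurable (W j) := fun j => hf.comp (hmeas j)
  have hWindep : iIndepFun W P := hindep.comp (fun _ => f) (fun _ => hf)
  have hexp : AEStronglyMeasurable (fun x => exp (t * f x)) μ := by fun_prop
  have hWint : ∀ j, Integrable (fun ω => exp (t * W j ω)) P := fun j => by
    rw [← hdist j] at hint hexp
    exact (integrable_map_measure hexp (hmeas j).aemeasurable).1 hint
  have hWmgf : ∀ j, mgf (W j) P t = mgf f μ t := fun j => by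
    rw [← hdist j] at hexp ⊢
    rw [mgf_map (hmeas j).aemeasurable hexp]
  have hchernoff := measure_ge_le_exp_mul_mgf a ht
    (hWindep.integrable_exp_mul_sum (s := s) hWmeas fun j _ => hWint j)
  rw [hWindep.mgf_sum hWmeas, prod_congr rfl fun j _ => hWmgf j, prod_const] at hchernoff
  simpa only [W, Finset.sum_apply, Function.comp_apply] using hchernoff

end ProbabilityTheory

theorem stmt14 {Ω : Type*} [MeasurableSpace Ω] (P : Measure Ω) [IsProbabilityMeasure P]
    (V : ℕ → Ω → ℝ) (hmeas : ∀ j, Measurable (V j))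
    (hindep : iIndepFun V P)
    (hdist : ∀ j, Measure.map (V j) P = gaussianReal 0 1)
    (β ε : ℝ) (hβ : 0 < β) (hε : 0 < ε) :
    ∀ M > 0, ∃ N : ℕ, ∀ n ≥ N,
      P {x | (n:ℝ) * ε ≤ ∑ j ∈ Finset.range n,
          |(n:ℝ) / Real.sqrt (2*β) *
            Real.log |1 + Real.sqrt (2*β) / (n:ℝ) * V j x| - V j x|}
        ≤ ENNReal.ofReal (Real.exp (-M * n)) := by
  intro M _
  obtain ⟨t, ht, hint⟩ := IsGaussian.exists_integrable_exp_sq (gaussianReal 0 1)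
  simp only [Real.norm_eq_abs, sq_abs] at hint
  set c := √(2 * β)
  have hc : 0 < c := sqrt_pos.2 (by linarith)
  set K := min (ε / (2 * c)) (1 / (4 * c ^ 2))
  have hK : 0 < K := lt_min (by positivity) (by positivity)
  obtain ⟨N, hN⟩ := exists_exp_neg_mul_sq_mul_pow_le (mul_pos ht hK) M (mgf_pos hint)
  refine ⟨max N 1, fun n hn => ?_⟩
  have hn_pos : (0 : ℝ) < n := by exact_mod_cast (le_max_right N 1).trans hn
  calc P _ ≤ P {ω | K * n ^ 2 ≤ ∑ j ∈ range n, V j ω ^ 2} := measure_mono fun ω hω =>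
        min_mul_sq_le_sum_sq_of_le_sum_abs_logPerturbation_sub _ (V · ω) hn_pos hc hω
    _ = ENNReal.ofReal (P.real {ω | K * n ^ 2 ≤ ∑ j ∈ range n, V j ω ^ 2}) :=
        (ofReal_measureReal).symm
    _ ≤ ENNReal.ofReal (exp (-M * n)) := by
      gcongr
      refine (hindep.measureReal_sum_comp_ge_le hmeas hdist (continuous_pow 2).measurable ht.le
        hint _ _).trans ?_
      rw [card_range, ← mul_assoc, neg_mul]
      exact hN n ((le_max_left N 1).trans hn)
end
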